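/- arXiv:math/0606531 — 2 statements merged into one kernel-verified Lean document; each statement's English description precedes it below -/
import Mathlib

section
/- Let F be an imaginary quadratic field and λ a unitary Hecke character of F satisfying λ^c = conj(λ) (i.e., λ(conj(x)) = conj(λ(x)) for all ideles x). Then the restriction of λ to the ideles of ℚ equals the trivial character if λ_∞(−1) = 1, and equals the quadratic character ω_{F/ℚ} associated to F/ℚ by class field theory if λ_∞(−1) = −1. -/
/-!
`λ^c = conj(λ)` makes `λ` trivial on norms: `λ(x · c x) = λ(x) · conj(λ(x)) = |λ(x)|² = 1`.
Since the norms have index at most two in the idele classes of `ℚ`, with `ε` as coset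
representative, `λ` restricted to `ℚ` is determined by `λ_∞(−1) = λ(ε)`. When this value is
`−1`, `ε` cannot be a norm, so `ω_{F/ℚ}(ε) = −1` as well and the two characters agree.
-/

theorem Complex.mul_conj_eq_one_of_norm_eq_one {z : ℂ} (hz : ‖z‖ = 1) :
    z * (starRingEnd ℂ) z = 1 := by
  rw [Complex.mul_conj', hz]
  norm_num

theorem MonoidHom.eq_of_eq_on_range_of_eq_at_coset_rep {G H M : Type*} [Monoid G] [Monoid H]
    [Monoid M] (Nm : H →* G) (ε : G) (hεgen : ∀ y : G, (∃ x, y = Nm x) ∨ ∃ x, y = ε * Nm x)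
    {φ ψ : G →* M} (hNm : ∀ x, φ (Nm x) = ψ (Nm x)) (hε : φ ε = ψ ε) : φ = ψ := by
  ext y
  rcases hεgen y with ⟨x, rfl⟩ | ⟨x, rfl⟩
  · exact hNm x
  · rw [map_mul, map_mul, hNm, hε]

theorem MonoidHom.apply_norm_eq_one_of_conj {AQ AF : Type*} [Monoid AQ] [Monoid AF]
    (j : AQ →* AF) (c : AF →* AF) (Nm : AF →* AQ) (hNm : ∀ x : AF, j (Nm x) = x * c x)
    (lam : AF →* ℂˣ) (hunit : ∀ x : AF, ‖(lam x : ℂ)‖ = 1)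
    (hconj : ∀ x : AF, (lam (c x) : ℂ) = (starRingEnd ℂ) (lam x)) (x : AF) :
    lam (j (Nm x)) = 1 := by
  apply Units.ext
  rw [hNm, map_mul, Units.val_mul, hconj, Units.val_one]
  exact Complex.mul_conj_eq_one_of_norm_eq_one (hunit x)

theorem stmt6_general {AQ AF : Type*} [CommGroup AQ] [CommGroup AF]
    (j : AQ →* AF)
    (c : AF ≃* AF)
    (Nm : AF →* AQ) (hNm : ∀ x : AF, j (Nm x) = x * c x)
    (lam : AF →* ℂˣ) (hunit : ∀ x : AF, ‖(lam x : ℂ)‖ = 1)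
    (hconj : ∀ x : AF, (lam (c x) : ℂ) = (starRingEnd ℂ) (lam x))
    (ω : AQ →* ℂˣ) (hω2 : ∀ y : AQ, (ω y : ℂ) = 1 ∨ (ω y : ℂ) = -1)
    (hωnorm : ∀ y : AQ, (ω y : ℂ) = 1 ↔ ∃ x : AF, Nm x = y)
    (ε : AQ) (hεgen : ∀ y : AQ, (∃ x : AF, y = Nm x) ∨ ∃ x : AF, y = ε * Nm x)
    (linf : ℂ) (hlinf : (lam (j ε) : ℂ) = linf) :
    (linf = 1 → ∀ y : AQ, lam (j y) = 1) ∧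
      (linf = -1 → ∀ y : AQ, (lam (j y) : ℂ) = (ω y : ℂ)) := by
  have hlam_norm := MonoidHom.apply_norm_eq_one_of_conj j c.toMonoidHom Nm hNm lam hunit hconj
  have hω_norm (x : AF) : ω (Nm x) = 1 := Units.ext ((hωnorm _).mpr ⟨x, rfl⟩)
  constructor
  · rintro rfl y
    have h := MonoidHom.eq_of_eq_on_range_of_eq_at_coset_rep Nm ε hεgen
      (φ := lam.comp j) (ψ := 1) hlam_norm (Units.ext hlinf)
    exact DFunLike.congr_fun h y
  · rintro rfl y
    have hε_not_norm (x : AF) : Nm x ≠ ε := fun hx => by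
      have h := congrArg Units.val (hlam_norm x)
      rw [hx, hlinf, Units.val_one] at h
      norm_num at h
    have hωε : (ω ε : ℂ) = -1 :=
      (hω2 ε).resolve_left fun h => ((hωnorm ε).mp h).elim hε_not_norm
    have h := MonoidHom.eq_of_eq_on_range_of_eq_at_coset_rep Nm ε hεgen
      (φ := lam.comp j) (ψ := ω) (fun x => (hlam_norm x).trans (hω_norm x).symm)
      (Units.ext (hlinf.trans hωε.symm))
    exact congrArg Units.val (DFunLike.congr_fun h y)

/-- Restriction to `ℚ` of a unitary Hecke character `λ` of an imaginary quadratic field `F`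
with `λ^c = conj(λ)`.  The idele class groups of `ℚ` and `F` are abstracted as commutative
groups `AQ`, `AF`, with `j` the natural inclusion, `c` conjugation (fixing the `ℚ`-ideles),
`Nm` the idelic norm (`j(Nm x) = x·c(x)`), `ω` the quadratic character `ω_{F/ℚ}` of class
field theory (a `±1`-valued character trivial exactly on norms), `ε` the class of the idele
`(−1 at ∞, 1 elsewhere)` — so that `AQ` is generated over the norms by `ε` and
`λ(j ε) = λ_∞(−1)`.  Conclusion: `λ∘j` is trivial if `λ_∞(−1) = 1` and equals `ω_{F/ℚ}` if
`λ_∞(−1) = −1`. -/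
theorem stmt6 {AQ AF : Type*} [CommGroup AQ] [CommGroup AF]
    (j : AQ →* AF)
    (c : AF ≃* AF) (hc : ∀ y : AQ, c (j y) = j y)
    (Nm : AF →* AQ) (hNm : ∀ x : AF, j (Nm x) = x * c x)
    (lam : AF →* ℂˣ) (hunit : ∀ x : AF, ‖(lam x : ℂ)‖ = 1)
    (hconj : ∀ x : AF, (lam (c x) : ℂ) = (starRingEnd ℂ) (lam x))
    (ω : AQ →* ℂˣ) (hω2 : ∀ y : AQ, (ω y : ℂ) = 1 ∨ (ω y : ℂ) = -1)
    (hωnorm : ∀ y : AQ, (ω y : ℂ) = 1 ↔ ∃ x : AF, Nm x = y)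
    (ε : AQ) (hεgen : ∀ y : AQ, (∃ x : AF, y = Nm x) ∨ ∃ x : AF, y = ε * Nm x)
    (linf : ℂ) (hlinf : (lam (j ε) : ℂ) = linf) :
    (linf = 1 → ∀ y : AQ, lam (j y) = 1) ∧
      (linf = -1 → ∀ y : AQ, (lam (j y) : ℂ) = (ω y : ℂ)) :=
  stmt6_general j c Nm hNm lam hunit hconj ω hω2 hωnorm ε hεgen linf hlinf
end

section
/- Let r ≥ 2, μ a character of (O_v/π^r)^* with conductor exactly π^r, and let c ∈ ℂ^*. Then Σ_{x ∈ (O_v/π^r)^*, x+1 a unit} μ^{-1}(x) = 0. Consequently Σ_{x ∈ (O_v/π^r)^*} μ^{-1}(x)·c^{v(x+1)} = μ^{-1}(−1)·(c^r − c^{r−1}), where v(x+1) denotes min(r, the π-adic valuation of a lift of x+1) and terms with x ≡ −1 mod π^r contribute μ^{-1}(−1)c^r. -/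
open scoped Classical

/-!
Fix `y ≡ 1 mod π^(r-1)` with `μ y ≠ 1`. Substituting `x ↦ x y` multiplies a sum
`∑ μ⁻¹(x) w(x)` by `μ⁻¹(y) ≠ 1`, so the sum vanishes whenever the weight `w` is invariant under
this substitution. Since `x y + 1 ≡ x + 1 mod π^(r-1)`, and `π^(r-1)` is nilpotent mod `π^r` as
`r ≥ 2`, two weights are invariant: the indicator of `x + 1` being a unit, and
`c ^ min (r-1) (v(x+1))`. The latter differs from `c ^ v(x+1)` only at `x = -1`, where `c ^ r`
replaces `c ^ (r-1)`.
-/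

open IsDiscreteValuationRing

theorem MonoidHom.sum_mul_eq_zero_of_mul_right_invariant {G K : Type*} [Group G] [Fintype G]
    [CommRing K] [IsDomain K] (χ : G →* Kˣ) {y : G} (hy : χ y ≠ 1) {w : G → K}
    (hw : ∀ x, w (x * y) = w x) : ∑ x, (χ x : K) * w x = 0 := by
  have hshift : ∑ x, (χ x : K) * w x = χ y * ∑ x, (χ x : K) * w x := calc
    ∑ x, (χ x : K) * w x = ∑ x, (χ (x * y) : K) * w (x * y) :=
      (Fintype.sum_equiv (Equiv.mulRight y) _ _ fun _ => rfl).symm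
    _ = χ y * ∑ x, (χ x : K) * w x := by
      simp only [map_mul, Units.val_mul, hw, Finset.mul_sum]
      exact Finset.sum_congr rfl fun x _ => by ring
  have hy' : (χ y : K) - 1 ≠ 0 := sub_ne_zero.2 fun h => hy (Units.ext h)
  exact (mul_eq_zero.1 (by linear_combination -hshift :
    ((χ y : K) - 1) * ∑ x, (χ x : K) * w x = 0)).resolve_left hy'

theorem isUnit_mul_add_one_iff_of_isNilpotent_sub_one {A : Type*} [CommRing A] {z : A}
    (hz : IsNilpotent (z - 1)) (x : A) : IsUnit (x * z + 1) ↔ IsUnit (x + 1) := by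
  have hnil : IsNilpotent (x * (z - 1)) := (Commute.all x _).isNilpotent_mul_left hz
  have hsplit : x * z + 1 = (x + 1) + x * (z - 1) := by ring
  refine ⟨fun h => ?_, fun h => hsplit ▸ hnil.isUnit_add_left_of_commute h (Commute.all _ _)⟩
  have := hnil.neg.isUnit_add_left_of_commute h (Commute.all _ _)
  rwa [hsplit, add_neg_cancel_right] at this

theorem Units.val_add_one_eq_zero_iff {M : Type*} [Ring M] (x : Mˣ) :
    (x : M) + 1 = 0 ↔ x = -1 := by
  rw [add_eq_zero_iff_eq_neg, ← Units.val_one, ← Units.val_neg, Units.val_inj]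

theorem Ideal.Quotient.isNilpotent_mk_span_pow {R : Type*} [CommRing R] (a : R) (r : ℕ) :
    IsNilpotent (Ideal.Quotient.mk (Ideal.span {a ^ r}) a) :=
  ⟨r, by rw [← map_pow, Ideal.Quotient.eq_zero_iff_mem]; exact Ideal.mem_span_singleton_self _⟩

theorem AddValuation.min_map_eq_of_le_map_sub {R Γ₀ : Type*} [Ring R]
    [LinearOrderedAddCommMonoidWithTop Γ₀] (v : AddValuation R Γ₀) {k : Γ₀} {a b : R}
    (h : k ≤ v (a - b)) : min k (v a) = min k (v b) := by
  have key : ∀ a b, k ≤ v (a - b) → min k (v b) ≤ min k (v a) := fun a b h =>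
    calc min k (v b) = min k (min (v b) (v (a - b))) := by
          rw [min_left_comm, min_eq_left h, min_comm]
      _ ≤ min k (v (b + (a - b))) := min_le_min_left _ (v.map_add _ _)
      _ = min k (v a) := by rw [add_sub_cancel]
  exact le_antisymm (key b a (v.map_sub_swap a b ▸ h)) (key a b h)

section TruncatedValuation

variable {R : Type*} [CommRing R] [IsDomain R] [IsDiscreteValuationRing R] {π : R} {r : ℕ}
  {val : R ⧸ Ideal.span {π ^ r} → ℕ}

theorem coe_val_mk_eq_min_addVal (hπ : Irreducible π)
    (hval : ∀ (y : R ⧸ Ideal.span {π ^ r}) (n : ℕ) (t : R), n < r → IsUnit t →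
      y = Ideal.Quotient.mk (Ideal.span {π ^ r}) (π ^ n * t) → val y = n)
    (hval0 : ∀ y : R ⧸ Ideal.span {π ^ r}, y = 0 → val y = r) (a : R) :
    (val (Ideal.Quotient.mk _ a) : ℕ∞) = min (r : ℕ∞) (addVal R a) := by
  by_cases h : π ^ r ∣ a
  · have hmk : Ideal.Quotient.mk (Ideal.span {π ^ r}) a = 0 :=
      Ideal.Quotient.eq_zero_iff_mem.2 (Ideal.mem_span_singleton.2 h)
    rw [hval0 _ hmk, min_eq_left (hπ.addVal_pow r ▸ addVal_le_iff_dvd.2 h)]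
  · obtain ⟨n, u, rfl⟩ := eq_unit_mul_pow_irreducible
      (show a ≠ 0 by rintro rfl; exact h (dvd_zero _)) hπ
    have hn : n < r := lt_of_not_ge fun hrn => h ((pow_dvd_pow π hrn).mul_left _)
    rw [hval _ n u hn u.isUnit (by rw [mul_comm]), addVal_def' u hπ n,
      min_eq_right (by exact_mod_cast hn.le)]

theorem val_lt_of_ne_zero (hπ : Irreducible π)
    (hv : ∀ a, (val (Ideal.Quotient.mk _ a) : ℕ∞) = min (r : ℕ∞) (addVal R a))
    {y : R ⧸ Ideal.span {π ^ r}} (hy : y ≠ 0) : val y < r := by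
  obtain ⟨a, rfl⟩ := Ideal.Quotient.mk_surjective y
  by_contra! h
  apply hy
  rw [Ideal.Quotient.eq_zero_iff_mem, Ideal.mem_span_singleton, ← addVal_le_iff_dvd,
    hπ.addVal_pow]
  exact (ENat.natCast_le_natCast.2 h).trans ((hv a).le.trans (min_le_right _ _))

theorem min_val_eq_of_dvd_sub (hπ : Irreducible π)
    (hv : ∀ a, (val (Ideal.Quotient.mk _ a) : ℕ∞) = min (r : ℕ∞) (addVal R a))
    {k : ℕ} (hk : k ≤ r) {y₁ y₂ : R ⧸ Ideal.span {π ^ r}}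
    (h : Ideal.Quotient.mk _ π ^ k ∣ y₁ - y₂) : min k (val y₁) = min k (val y₂) := by
  obtain ⟨a₁, rfl⟩ := Ideal.Quotient.mk_surjective y₁
  obtain ⟨a₂, rfl⟩ := Ideal.Quotient.mk_surjective y₂
  obtain ⟨d, hd⟩ := h
  obtain ⟨b, rfl⟩ := Ideal.Quotient.mk_surjective d
  rw [← map_pow, ← map_mul, ← map_sub, Ideal.Quotient.eq, Ideal.mem_span_singleton] at hd
  have hdvd : π ^ k ∣ a₁ - a₂ := by
    simpa using ((pow_dvd_pow π hk).trans hd).add (dvd_mul_right (π ^ k) b)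
  have hmin := (addVal R).min_map_eq_of_le_map_sub (k := k)
    (hπ.addVal_pow k ▸ addVal_le_iff_dvd.2 hdvd)
  apply Nat.cast_injective (R := ℕ∞)
  rw [Nat.mono_cast.map_min, Nat.mono_cast.map_min, hv, hv, ← min_assoc, ← min_assoc,
    min_eq_left (ENat.natCast_le_natCast.2 hk : (k : ℕ∞) ≤ r), hmin]

theorem pow_val_eq_pow_min_add_ite {K : Type*} [CommRing K] (hπ : Irreducible π)
    (hv : ∀ a, (val (Ideal.Quotient.mk _ a) : ℕ∞) = min (r : ℕ∞) (addVal R a))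
    (hval0 : ∀ y : R ⧸ Ideal.span {π ^ r}, y = 0 → val y = r) (c : K)
    (y : R ⧸ Ideal.span {π ^ r}) :
    c ^ val y = c ^ min (r - 1) (val y) + if y = 0 then c ^ r - c ^ (r - 1) else 0 := by
  split_ifs with hy
  · rw [hval0 y hy, min_eq_left (Nat.sub_le r 1)]
    ring
  · rw [min_eq_right (Nat.le_sub_one_of_lt (val_lt_of_ne_zero hπ hv hy)), add_zero]

end TruncatedValuation

theorem stmt12_general {R : Type*} [CommRing R] [IsDomain R] [IsDiscreteValuationRing R]
    (π : R) (hπ : Irreducible π) (r : ℕ) (hr : 2 ≤ r)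
    [Fintype (R ⧸ Ideal.span {π ^ r})ˣ]
    (μ : (R ⧸ Ideal.span {π ^ r})ˣ →* ℂˣ)
    (hcond : ∃ y : (R ⧸ Ideal.span {π ^ r})ˣ,
      (∃ t : R, ((y : R ⧸ Ideal.span {π ^ r}) - 1 =
          Ideal.Quotient.mk (Ideal.span {π ^ r}) (π ^ (r - 1) * t))) ∧ μ y ≠ 1)
    (c : ℂ)
    (val : (R ⧸ Ideal.span {π ^ r}) → ℕ)
    (hval : ∀ (y : R ⧸ Ideal.span {π ^ r}) (n : ℕ) (t : R), n < r → IsUnit t →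
      y = Ideal.Quotient.mk (Ideal.span {π ^ r}) (π ^ n * t) → val y = n)
    (hval0 : ∀ y : R ⧸ Ideal.span {π ^ r}, y = 0 → val y = r) :
    ((∑ x ∈ Finset.univ.filter (fun x : (R ⧸ Ideal.span {π ^ r})ˣ =>
        IsUnit ((x : R ⧸ Ideal.span {π ^ r}) + 1)), (((μ x)⁻¹ : ℂˣ) : ℂ)) = 0) ∧
      (∑ x : (R ⧸ Ideal.span {π ^ r})ˣ,
          (((μ x)⁻¹ : ℂˣ) : ℂ) * c ^ val ((x : R ⧸ Ideal.span {π ^ r}) + 1)) =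
        (((μ (-1))⁻¹ : ℂˣ) : ℂ) * (c ^ r - c ^ (r - 1)) := by
  obtain ⟨y, ⟨t, hyt⟩, hμy⟩ := hcond
  have hχy : μ⁻¹ y ≠ 1 := by simpa using hμy
  have hy : Ideal.Quotient.mk _ π ^ (r - 1) ∣ (y : R ⧸ Ideal.span {π ^ r}) - 1 :=
    ⟨Ideal.Quotient.mk _ t, by rw [hyt, map_mul, map_pow]⟩
  refine ⟨?_, ?_⟩
  · have hnil : IsNilpotent ((y : R ⧸ Ideal.span {π ^ r}) - 1) := by
      obtain ⟨s, hs⟩ := hy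
      rw [hs]
      exact (Commute.all _ _).isNilpotent_mul_right
        ((Ideal.Quotient.isNilpotent_mk_span_pow π r).pow_of_pos (by omega))
    rw [Finset.sum_filter]
    simpa using (μ⁻¹).sum_mul_eq_zero_of_mul_right_invariant hχy
      (w := fun x => if IsUnit ((x : R ⧸ Ideal.span {π ^ r}) + 1) then 1 else 0)
      fun x => by simp only [Units.val_mul, isUnit_mul_add_one_iff_of_isNilpotent_sub_one hnil]
  · have hv := coe_val_mk_eq_min_addVal hπ hval hval0
    have htrunc := (μ⁻¹).sum_mul_eq_zero_of_mul_right_invariant hχy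
      (w := fun x => c ^ min (r - 1) (val ((x : R ⧸ Ideal.span {π ^ r}) + 1)))
      fun x => by
        simp only [Units.val_mul]
        rw [min_val_eq_of_dvd_sub hπ hv (by omega) (y₂ := (x : R ⧸ Ideal.span {π ^ r}) + 1)]
        rw [show (x : R ⧸ Ideal.span {π ^ r}) * y + 1 - (x + 1) = x * (y - 1) by ring]
        exact hy.mul_left _
    simp only [pow_val_eq_pow_min_add_ite hπ hv hval0 c, Units.val_add_one_eq_zero_iff, mul_add,
      Finset.sum_add_distrib, mul_ite, mul_zero, Finset.sum_ite_eq', Finset.mem_univ, if_true]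
    simpa using htrunc

/-- Key character sums in the twisted-sum-to-newvector lemma, for `r ≥ 2`.  Here `R` is a DVR
with uniformizer `π`, `A = R/π^r`, and `μ` is a character of `A^*` of conductor exactly `π^r`
(nontrivial on the image of `1 + π^{r-1}R`).  `val : A → ℕ` is the truncated valuation:
`val y = n` if `y = π^n·(unit)` with `n < r`, and `val y = r` if `y = 0`.  Then
`Σ_{x ∈ A^*, x+1 a unit} μ^{-1}(x) = 0`, and
`Σ_{x ∈ A^*} μ^{-1}(x)·c^{val(x+1)} = μ^{-1}(−1)·(c^r − c^{r-1})` for any `c ∈ ℂ^*`. -/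
theorem stmt12 {R : Type*} [CommRing R] [IsDomain R] [IsDiscreteValuationRing R]
    (π : R) (hπ : Irreducible π) (r : ℕ) (hr : 2 ≤ r)
    [Fintype (R ⧸ Ideal.span {π ^ r})ˣ]
    (μ : (R ⧸ Ideal.span {π ^ r})ˣ →* ℂˣ)
    (hcond : ∃ y : (R ⧸ Ideal.span {π ^ r})ˣ,
      (∃ t : R, ((y : R ⧸ Ideal.span {π ^ r}) - 1 =
          Ideal.Quotient.mk (Ideal.span {π ^ r}) (π ^ (r - 1) * t))) ∧ μ y ≠ 1)
    (c : ℂ) (hc : c ≠ 0)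
    (val : (R ⧸ Ideal.span {π ^ r}) → ℕ)
    (hval : ∀ (y : R ⧸ Ideal.span {π ^ r}) (n : ℕ) (t : R), n < r → IsUnit t →
      y = Ideal.Quotient.mk (Ideal.span {π ^ r}) (π ^ n * t) → val y = n)
    (hval0 : ∀ y : R ⧸ Ideal.span {π ^ r}, y = 0 → val y = r) :
    ((∑ x ∈ Finset.univ.filter (fun x : (R ⧸ Ideal.span {π ^ r})ˣ =>
        IsUnit ((x : R ⧸ Ideal.span {π ^ r}) + 1)), (((μ x)⁻¹ : ℂˣ) : ℂ)) = 0) ∧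
      (∑ x : (R ⧸ Ideal.span {π ^ r})ˣ,
          (((μ x)⁻¹ : ℂˣ) : ℂ) * c ^ val ((x : R ⧸ Ideal.span {π ^ r}) + 1)) =
        (((μ (-1))⁻¹ : ℂˣ) : ℂ) * (c ^ r - c ^ (r - 1)) :=
  stmt12_general π hπ r hr μ hcond c val hval hval0
end
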